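/- arXiv:1703.07898 — 5 statements merged into one kernel-verified Lean document; each statement's English description precedes it below -/
import Mathlib

section
/- Let R be a commutative ring and Γ = R[z,z⁻¹] the Laurent polynomial ring. Define d(φ) = φ − M_z ∘ φ ∘ M_{z⁻¹} for R-linear maps φ : Γ → Γ, and let h be the operator on R-linear endomorphisms of Γ determined on the basis {z^i} by h(ψ)(z^i) = Σ_{j=0}^{i−1} z^j·ψ(z^{i−j}) for i ≥ 0 (in particular h(ψ)(1) = 0) and h(ψ)(z^i) = −Σ_{j=i}^{−1} z^j·ψ(z^{i−j}) for i < 0. Then for every R-linear φ, ψ : Γ → Γ one has h(d(φ)) = φ − M_{φ(1)} and d(h(ψ)) = ψ. Consequently, in the two-term complex End_R(Γ) →d End_R(Γ), h is a chain homotopy between the identity and the projection onto the multiplication operators: the kernel of d is exactly {M_g : g ∈ Γ} ≅ Γ (via φ ↦ φ(1)), and d is surjective. -/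
/-!
`d` is `ℤ`-linear, kills every multiplication operator, and on the basis reads
`d(φ)(zⁱ) = φ(zⁱ) - z·φ(zⁱ⁻¹)`. So `d(φ) = 0` forces `φ(zⁱ) = zⁱ·φ(1)` by induction in both
directions (`z` is a unit), i.e. `ker d = {M_g}`. On the other hand `h(ψ)(zⁱ)` is built exactly
so that `h(ψ)(zⁱ) - z·h(ψ)(zⁱ⁻¹) = ψ(zⁱ)`: multiplying by `z` shifts the summation range by one
and leaves the single term `ψ(zⁱ)`. Hence `d ∘ h = id`, and then `h(d(φ)) - φ + M_{φ(1)}`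
lies in `ker d` and vanishes at `1`, so it is `0`.
-/

open LaurentPolynomial

/-- The differential `d(φ) = φ - M_z ∘ φ ∘ M_{z⁻¹}` on `R`-linear endomorphisms of the
Laurent polynomial ring `Γ = R[z,z⁻¹]`, where `M_g` denotes multiplication by `g`. -/
noncomputable def circleDiff (R : Type*) [CommRing R]
    (φ : LaurentPolynomial R →ₗ[R] LaurentPolynomial R) :
    LaurentPolynomial R →ₗ[R] LaurentPolynomial R :=
  φ - (LinearMap.mulLeft R (T 1)) ∘ₗ φ ∘ₗ (LinearMap.mulLeft R (T (-1)))

namespace LaurentPolynomial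

variable {R M : Type*} [Semiring R] [AddCommMonoid M] [Module R M]

theorem linearMap_ext {φ ψ : R[T;T⁻¹] →ₗ[R] M} (h : ∀ i, φ (T i) = ψ (T i)) : φ = ψ :=
  AddMonoidAlgebra.lhom_ext' fun i => LinearMap.ext_ring (h i)

end LaurentPolynomial

section CommRing

variable {R : Type*} [CommRing R]

theorem LaurentPolynomial.eq_mulLeft_of_map_T_add_one {φ : R[T;T⁻¹] →ₗ[R] R[T;T⁻¹]}
    (hφ : ∀ i, φ (T (i + 1)) = T 1 * φ (T i)) : φ = LinearMap.mulLeft R (φ 1) := by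
  have step : ∀ i, φ (T i) = T i * φ 1 ↔ φ (T (i + 1)) = T (i + 1) * φ 1 := fun i => by
    rw [hφ, T_add, mul_comm (T i) (T 1), mul_assoc, (isUnit_T 1).mul_right_inj]
  refine linearMap_ext fun i => ?_
  rw [LinearMap.mulLeft_apply, mul_comm (φ 1)]
  induction i using Int.induction_on with
  | zero => rw [T_zero, one_mul]
  | succ k ih => exact (step k).1 ih
  | pred k ih => exact (step _).2 (by rwa [sub_add_cancel])

theorem circleDiff_apply_T (φ : R[T;T⁻¹] →ₗ[R] R[T;T⁻¹]) (i : ℤ) :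
    circleDiff R φ (T i) = φ (T i) - T 1 * φ (T (i - 1)) := by
  simp only [circleDiff, LinearMap.sub_apply, LinearMap.comp_apply, LinearMap.mulLeft_apply,
    ← T_add, neg_add_eq_sub]

theorem circleDiff_sub (φ ψ : R[T;T⁻¹] →ₗ[R] R[T;T⁻¹]) :
    circleDiff R (φ - ψ) = circleDiff R φ - circleDiff R ψ := by
  simp only [circleDiff, LinearMap.sub_comp, LinearMap.comp_sub]
  abel

theorem circleDiff_mulLeft (g : R[T;T⁻¹]) : circleDiff R (LinearMap.mulLeft R g) = 0 := by
  refine linearMap_ext fun i => ?_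
  rw [circleDiff_apply_T, LinearMap.zero_apply, LinearMap.mulLeft_apply, LinearMap.mulLeft_apply,
    mul_left_comm, ← T_add, add_sub_cancel, sub_self]

theorem eq_mulLeft_of_circleDiff_eq_zero {φ : R[T;T⁻¹] →ₗ[R] R[T;T⁻¹]}
    (hφ : circleDiff R φ = 0) : φ = LinearMap.mulLeft R (φ 1) :=
  eq_mulLeft_of_map_T_add_one fun i => by
    simpa [circleDiff_apply_T, sub_eq_zero] using LinearMap.congr_fun hφ (T (i + 1))

theorem circleDiff_eq_zero_iff (φ : R[T;T⁻¹] →ₗ[R] R[T;T⁻¹]) :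
    circleDiff R φ = 0 ↔ ∃ g, φ = LinearMap.mulLeft R g :=
  ⟨fun hφ => ⟨φ 1, eq_mulLeft_of_circleDiff_eq_zero hφ⟩,
    by rintro ⟨g, rfl⟩; exact circleDiff_mulLeft g⟩

theorem apply_circleDiff_of_rightInverse
    {h : (R[T;T⁻¹] →ₗ[R] R[T;T⁻¹]) → (R[T;T⁻¹] →ₗ[R] R[T;T⁻¹])}
    (hdh : ∀ ψ, circleDiff R (h ψ) = ψ) (h_one : ∀ ψ, h ψ 1 = 0)
    (φ : R[T;T⁻¹] →ₗ[R] R[T;T⁻¹]) :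
    h (circleDiff R φ) = φ - LinearMap.mulLeft R (φ 1) := by
  set D := h (circleDiff R φ) - (φ - LinearMap.mulLeft R (φ 1))
  have hD : circleDiff R D = 0 := by
    rw [circleDiff_sub, circleDiff_sub, hdh, circleDiff_mulLeft, sub_zero, sub_self]
  have hD_one : D 1 = 0 := by simp [D, h_one]
  have hD_zero := eq_mulLeft_of_circleDiff_eq_zero hD
  rw [hD_one, LinearMap.mulLeft_zero_eq_zero] at hD_zero
  exact sub_eq_zero.1 hD_zero

section Homotopy

variable {h : (R[T;T⁻¹] →ₗ[R] R[T;T⁻¹]) → (R[T;T⁻¹] →ₗ[R] R[T;T⁻¹])}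
  (h_nonneg : ∀ ψ (i : ℤ), 0 ≤ i → h ψ (T i) = ∑ j ∈ Finset.Ico (0 : ℤ) i, T j * ψ (T (i - j)))
  (h_neg : ∀ ψ (i : ℤ), i < 0 → h ψ (T i) = -∑ j ∈ Finset.Icc i (-1 : ℤ), T j * ψ (T (i - j)))
include h_nonneg

theorem circleHomotopy_apply_one (ψ : R[T;T⁻¹] →ₗ[R] R[T;T⁻¹]) : h ψ 1 = 0 := by
  simpa [T_zero] using h_nonneg ψ 0 le_rfl

include h_neg

theorem circleHomotopy_apply_T_of_nonpos (ψ : R[T;T⁻¹] →ₗ[R] R[T;T⁻¹]) {i : ℤ} (hi : i ≤ 0) :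
    h ψ (T i) = -∑ j ∈ Finset.Ico i 0, T j * ψ (T (i - j)) := by
  rcases hi.lt_or_eq with hi | rfl
  · rw [h_neg ψ i hi, ← Finset.Ico_add_one_right_eq_Icc, neg_add_cancel]
  · rw [h_nonneg ψ 0 le_rfl, Finset.Ico_self, Finset.sum_empty, neg_zero]

theorem circleDiff_circleHomotopy (ψ : R[T;T⁻¹] →ₗ[R] R[T;T⁻¹]) : circleDiff R (h ψ) = ψ := by
  refine linearMap_ext fun i => ?_
  have shift : ∀ a b : ℤ, T 1 * ∑ j ∈ Finset.Ico a b, T j * ψ (T (i - 1 - j)) =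
      ∑ j ∈ Finset.Ico (a + 1) (b + 1), T j * ψ (T (i - j)) := fun a b => by
    rw [Finset.mul_sum, ← Finset.sum_Ico_add']
    refine Finset.sum_congr rfl fun j _ => ?_
    rw [← mul_assoc, ← T_add, sub_sub, add_comm 1 j]
  rw [circleDiff_apply_T]
  rcases lt_or_ge 0 i with hi | hi
  · rw [h_nonneg ψ i hi.le, h_nonneg ψ (i - 1) (by omega), shift,
      ← Finset.insert_Ico_add_one_left_eq_Ico hi, Finset.sum_insert (by simp), zero_add,
      sub_add_cancel, add_sub_cancel_right, T_zero, one_mul, sub_zero]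
  · rw [circleHomotopy_apply_T_of_nonpos h_nonneg h_neg ψ hi,
      circleHomotopy_apply_T_of_nonpos h_nonneg h_neg ψ (by omega : i - 1 ≤ 0), mul_neg, shift,
      sub_add_cancel, ← Finset.insert_Ico_right_eq_Ico_add_one hi,
      Finset.sum_insert (by simp), T_zero, one_mul, sub_zero]
    abel

end Homotopy

end CommRing

/-- In the two-term complex `End_R(Γ) → End_R(Γ)`, with differential
`d(φ) = φ − M_z ∘ φ ∘ M_{z⁻¹}` and `h` the operator determined on the basis `{z^i}` by
`h(ψ)(z^i) = Σ_{j=0}^{i−1} z^j·ψ(z^{i−j})` for `i ≥ 0` and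
`h(ψ)(z^i) = −Σ_{j=i}^{−1} z^j·ψ(z^{i−j})` for `i < 0`, one has
`h(d(φ)) = φ − M_{φ(1)}` and `d(h(ψ)) = ψ`; hence `h` is a chain homotopy between the identity
and the projection onto multiplication operators, the kernel of `d` is exactly
`{M_g : g ∈ Γ} ≅ Γ` (via `φ ↦ φ(1)`), and `d` is surjective. -/
theorem laurent_circle_homotopy (R : Type*) [CommRing R]
    (h : (LaurentPolynomial R →ₗ[R] LaurentPolynomial R) →
      (LaurentPolynomial R →ₗ[R] LaurentPolynomial R))
    (h_nonneg : ∀ (ψ : LaurentPolynomial R →ₗ[R] LaurentPolynomial R) (i : ℤ), 0 ≤ i →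
      h ψ (T i) = ∑ j ∈ Finset.Ico (0 : ℤ) i, T j * ψ (T (i - j)))
    (h_neg : ∀ (ψ : LaurentPolynomial R →ₗ[R] LaurentPolynomial R) (i : ℤ), i < 0 →
      h ψ (T i) = -∑ j ∈ Finset.Icc i (-1 : ℤ), T j * ψ (T (i - j))) :
    (∀ φ, h (circleDiff R φ) = φ - LinearMap.mulLeft R (φ 1)) ∧
    (∀ ψ, circleDiff R (h ψ) = ψ) ∧
    (∀ φ, circleDiff R φ = 0 ↔ ∃ g : LaurentPolynomial R, φ = LinearMap.mulLeft R g) ∧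
    (∀ φ, circleDiff R φ = 0 → φ = LinearMap.mulLeft R (φ 1)) ∧
    Function.Surjective (circleDiff R) := by
  have hdh := circleDiff_circleHomotopy h_nonneg h_neg
  exact ⟨apply_circleDiff_of_rightInverse hdh (circleHomotopy_apply_one h_nonneg), hdh,
    circleDiff_eq_zero_iff, fun _ => eq_mulLeft_of_circleDiff_eq_zero, fun ψ => ⟨h ψ, hdh ψ⟩⟩
end

section
/- Let k be a field equipped with an additive valuation v : k → ℝ ∪ {+∞} (v(x) = +∞ iff x = 0, v(xy) = v(x) + v(y), v(x+y) ≥ min(v(x), v(y))). For a Laurent polynomial F = Σ_α c_α z^α in n variables over k and p ∈ ℝⁿ set val_p(F) = min_{α ∈ supp F}(v(c_α) + ⟨α, p⟩) (with val_p(0) = +∞), and for a nonempty P ⊆ ℝⁿ set val_P(F) = inf_{p∈P} val_p(F). Write F₊ for the sum of the terms of F whose first exponent α₁ is ≥ 1 and F₋ for the sum of the terms with α₁ ≤ 0, so F = F₋ + F₊, and for all F, G one has F₋ + G₊ + (F−G)₊ = F and F₋ + G₊ − (F−G)₋ = G. Let P = [a₁,b₁] × ⋯ × [aₙ,bₙ]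 be a box with a₁ ≤ 0 ≤ b₁, and set P₊ = P ∩ {p₁ ≥ 0}, P₋ = P ∩ {p₁ ≤ 0}, P_± = P ∩ {p₁ = 0}. Then for all Laurent polynomials F: (1) val_{P₊}(F₊) ≥ val_{P_±}(F) and val_{P₋}(F₋) ≥ val_{P_±}(F); (2) val_P(F₋) ≥ val_{P₊}(F) and val_P(F₊) ≥ val_{P₋}(F). These identities and valuation bounds express that the splitting F ↦ (F₊, −F₋), (F,G) ↦ F₋ + G₊ gives a valuation-nondecreasing null-homotopy of the augmented Čech complex of the two-term Laurent cover {P₊, P₋} of P. -/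
/-- The standard pairing `⟨α, p⟩ = Σᵢ αᵢ pᵢ` of `α ∈ ℤⁿ` with `p ∈ ℝⁿ`. -/
noncomputable def zpairing {n : ℕ} (α : Fin n → ℤ) (p : Fin n → ℝ) : ℝ :=
  ∑ i, (α i : ℝ) * p i

/-- The valuation `val_p(F) = min_{α ∈ supp F} (v(c_α) + ⟨α, p⟩)` of a Laurent polynomial
`F = Σ_α c_α z^α` at the point `p ∈ ℝⁿ` (with `val_p(0) = +∞`). -/
noncomputable def valPt {k : Type*} [Field k] {n : ℕ} (v : k → EReal)
    (p : Fin n → ℝ) (F : AddMonoidAlgebra k (Fin n → ℤ)) : EReal :=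
  F.coeff.support.inf fun α => v (F.coeff α) + ((zpairing α p : ℝ) : EReal)

/-- The valuation `val_P(F) = inf_{p ∈ P} val_p(F)` associated to a subset `P ⊆ ℝⁿ`. -/
noncomputable def valSet {k : Type*} [Field k] {n : ℕ} (v : k → EReal)
    (P : Set (Fin n → ℝ)) (F : AddMonoidAlgebra k (Fin n → ℤ)) : EReal :=
  ⨅ p ∈ P, valPt v p F

/-- `F₊`: the sum of the terms of `F` whose first exponent `α₁` is `≥ 1`. -/
noncomputable def posPart {k : Type*} [Field k] {n : ℕ} [NeZero n]
    (F : AddMonoidAlgebra k (Fin n → ℤ)) : AddMonoidAlgebra k (Fin n → ℤ) := by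
  classical exact AddMonoidAlgebra.ofCoeff (F.coeff.filter fun α => 1 ≤ α 0)

/-- `F₋`: the sum of the terms of `F` whose first exponent `α₁` is `≤ 0`. -/
noncomputable def negPart {k : Type*} [Field k] {n : ℕ} [NeZero n]
    (F : AddMonoidAlgebra k (Fin n → ℤ)) : AddMonoidAlgebra k (Fin n → ℤ) := by
  classical exact AddMonoidAlgebra.ofCoeff (F.coeff.filter fun α => α 0 ≤ 0)

/-- The box `[a₁,b₁] × ⋯ × [aₙ,bₙ] ⊆ ℝⁿ`. -/
def box {n : ℕ} (a b : Fin n → ℝ) : Set (Fin n → ℝ) :=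
  {p | ∀ i, p i ∈ Set.Icc (a i) (b i)}

section Aux

open Finsupp

private lemma valSet_key {k : Type*} [Field k] {n : ℕ} (v : k → EReal)
    (A B : Set (Fin n → ℝ)) (pred : (Fin n → ℤ) → Prop) [DecidablePred pred]
    (F : AddMonoidAlgebra k (Fin n → ℤ))
    (h : ∀ p ∈ B, ∃ q ∈ A, ∀ α ∈ F.coeff.support, pred α → zpairing α q ≤ zpairing α p) :
    valSet v A F ≤ valSet v B (AddMonoidAlgebra.ofCoeff (F.coeff.filter pred)) := by
  refine le_iInf₂ fun p hp => ?_
  obtain ⟨q, hqA, hq⟩ := h p hp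
  refine le_trans (iInf₂_le q hqA) ?_
  refine Finset.le_inf fun α hα => ?_
  simp only [AddMonoidAlgebra.coeff_ofCoeff] at hα ⊢
  rw [Finsupp.support_filter, Finset.mem_filter] at hα
  refine le_trans (Finset.inf_le hα.1) ?_
  rw [Finsupp.filter_apply_pos _ _ hα.2]
  exact add_le_add_right (EReal.coe_le_coe_iff.2 (hq α hα.1 hα.2)) _

private lemma zpairing_update_le {n : ℕ} [NeZero n] (α : Fin n → ℤ) (p : Fin n → ℝ) (c : ℝ)
    (h : (α 0 : ℝ) * c ≤ (α 0 : ℝ) * p 0) :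
    zpairing α (Function.update p 0 c) ≤ zpairing α p := by
  unfold zpairing
  refine Finset.sum_le_sum fun i _ => ?_
  rcases eq_or_ne i 0 with rfl | hi
  · simpa using h
  · rw [Function.update_of_ne hi]

end Aux


/-- Tate's null-homotopy for a two-term Laurent cover of a box: for a field `k` with additive
valuation `v`, the splitting `F = F₋ + F₊` of Laurent polynomials into parts with first exponent
`≤ 0` resp. `≥ 1` satisfies `F₋ + G₊ + (F−G)₊ = F` and `F₋ + G₊ − (F−G)₋ = G`, and for the box
`P = [a₁,b₁] × ⋯ × [aₙ,bₙ]` with `a₁ ≤ 0 ≤ b₁`, with `P₊ = P ∩ {p₁ ≥ 0}`, `P₋ = P ∩ {p₁ ≤ 0}`,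
`P_± = P ∩ {p₁ = 0}`, the valuation bounds
`val_{P₊}(F₊) ≥ val_{P_±}(F)`, `val_{P₋}(F₋) ≥ val_{P_±}(F)`,
`val_P(F₋) ≥ val_{P₊}(F)` and `val_P(F₊) ≥ val_{P₋}(F)` hold. -/
theorem tate_two_term_laurent_homotopy {k : Type*} [Field k] (v : k → EReal)
    (hv_top : ∀ x : k, v x = ⊤ ↔ x = 0) (hv_bot : ∀ x : k, v x ≠ ⊥)
    (hv_mul : ∀ x y : k, v (x * y) = v x + v y)
    (hv_add : ∀ x y : k, min (v x) (v y) ≤ v (x + y))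
    (n : ℕ) [NeZero n] (a b : Fin n → ℝ) (ha : a 0 ≤ 0) (hb : 0 ≤ b 0) :
    (∀ F : AddMonoidAlgebra k (Fin n → ℤ), negPart F + posPart F = F) ∧
    (∀ F G : AddMonoidAlgebra k (Fin n → ℤ),
      negPart F + posPart G + posPart (F - G) = F ∧
      negPart F + posPart G - negPart (F - G) = G) ∧
    (∀ F : AddMonoidAlgebra k (Fin n → ℤ),
      valSet v (box a b ∩ {p | p 0 = 0}) F ≤ valSet v (box a b ∩ {p | 0 ≤ p 0}) (posPart F) ∧
      valSet v (box a b ∩ {p | p 0 = 0}) F ≤ valSet v (box a b ∩ {p | p 0 ≤ 0}) (negPart F)) ∧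
    (∀ F : AddMonoidAlgebra k (Fin n → ℤ),
      valSet v (box a b ∩ {p | 0 ≤ p 0}) F ≤ valSet v (box a b) (negPart F) ∧
      valSet v (box a b ∩ {p | p 0 ≤ 0}) F ≤ valSet v (box a b) (posPart F)) := by
  classical
  have hneg : ∀ F : AddMonoidAlgebra k (Fin n → ℤ), negPart F + posPart F = F := by
    intro F
    have : (fun α : Fin n → ℤ => 1 ≤ α 0) = fun α => ¬ α 0 ≤ 0 := by
      funext α; rw [eq_iff_iff, not_le, Int.lt_iff_add_one_le, zero_add]
    rw [show _root_.negPart F = AddMonoidAlgebra.ofCoeff (F.coeff.filter (fun α => α 0 ≤ 0)) from rfl,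
      show _root_.posPart F = AddMonoidAlgebra.ofCoeff (F.coeff.filter (fun α => 1 ≤ α 0)) from rfl]
    rw [show AddMonoidAlgebra.ofCoeff (F.coeff.filter fun α => 1 ≤ α 0) = AddMonoidAlgebra.ofCoeff (F.coeff.filter (fun α => ¬ α 0 ≤ 0)) by
      congr 2]
    exact congrArg AddMonoidAlgebra.ofCoeff (Finsupp.filter_pos_add_filter_neg F.coeff _)
  have hposadd : ∀ F G : AddMonoidAlgebra k (Fin n → ℤ),
      posPart (F - G) = posPart F - posPart G := fun F G =>
    congrArg AddMonoidAlgebra.ofCoeff (Finsupp.filter_sub _ F.coeff G.coeff)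
  have hnegadd : ∀ F G : AddMonoidAlgebra k (Fin n → ℤ),
      negPart (F - G) = negPart F - negPart G := fun F G =>
    congrArg AddMonoidAlgebra.ofCoeff (Finsupp.filter_sub _ F.coeff G.coeff)
  refine ⟨hneg, fun F G => ⟨?_, ?_⟩, fun F => ⟨?_, ?_⟩, fun F => ⟨?_, ?_⟩⟩
  · rw [hposadd]
    have := hneg F
    abel_nf
    abel_nf at this
    linear_combination (norm := abel) this
  · rw [hnegadd]
    have := hneg G
    linear_combination (norm := abel) this
  · refine valSet_key v _ _ _ F fun p hp => ⟨Function.update p 0 0, ⟨?_, ?_⟩, ?_⟩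
    · intro i
      rcases eq_or_ne i 0 with rfl | hi
      · simpa using ⟨ha, hb⟩
      · rw [Function.update_of_ne hi]; exact hp.1 i
    · simp
    · intro α _ hα
      refine zpairing_update_le α p 0 ?_
      rw [mul_zero]
      have h1 : (1:ℝ) ≤ (α 0 : ℝ) := by exact_mod_cast hα
      exact mul_nonneg (by linarith) hp.2
  · refine valSet_key v _ _ _ F fun p hp => ⟨Function.update p 0 0, ⟨?_, ?_⟩, ?_⟩
    · intro i
      rcases eq_or_ne i 0 with rfl | hi
      · simpa using ⟨ha, hb⟩
      · rw [Function.update_of_ne hi]; exact hp.1 i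
    · simp
    · intro α _ hα
      refine zpairing_update_le α p 0 ?_
      rw [mul_zero]
      have h1 : (α 0 : ℝ) ≤ 0 := by exact_mod_cast hα
      have h2 : p 0 ≤ 0 := hp.2
      nlinarith
  · refine valSet_key v _ _ _ F fun p hp => ⟨Function.update p 0 (max (p 0) 0), ⟨?_, ?_⟩, ?_⟩
    · intro i
      rcases eq_or_ne i 0 with rfl | hi
      · simp only [Function.update_self]
        exact ⟨le_max_of_le_left (hp 0).1, max_le (hp 0).2 hb⟩
      · rw [Function.update_of_ne hi]; exact hp i
    · simp
    · intro α _ hα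
      refine zpairing_update_le α p _ ?_
      have h1 : (α 0 : ℝ) ≤ 0 := by exact_mod_cast hα
      exact mul_le_mul_of_nonpos_left (le_max_left _ _) h1
  · refine valSet_key v _ _ _ F fun p hp => ⟨Function.update p 0 (min (p 0) 0), ⟨?_, ?_⟩, ?_⟩
    · intro i
      rcases eq_or_ne i 0 with rfl | hi
      · simp only [Function.update_self]
        exact ⟨le_min (hp 0).1 ha, min_le_of_left_le (hp 0).2⟩
      · rw [Function.update_of_ne hi]; exact hp i
    · simp
    · intro α _ hα
      refine zpairing_update_le α p _ ?_
      have h1 : (1:ℝ) ≤ (α 0 : ℝ) := by exact_mod_cast hα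
      exact mul_le_mul_of_nonneg_left (min_le_left _ _) (by linarith)
end

section
/- Let k be a field equipped with an additive valuation v : k → ℝ ∪ {+∞} (v(x) = +∞ iff x = 0, v(xy) = v(x) + v(y), v(x+y) ≥ min(v(x), v(y))), and let Γ = k[z,z⁻¹]. For F = Σ_i c_i z^i ∈ Γ and p ∈ ℝ set val_p(F) = min_{i ∈ supp F}(v(c_i) + i·p), and for a nonempty interval P ⊆ ℝ set val_P(F) = inf_{p∈P} val_p(F). Let h be the operator on k-linear endomorphisms of Γ determined by h(ψ)(z^i) = Σ_{j=0}^{i−1} z^j·ψ(z^{i−j}) for i ≥ 0 and h(ψ)(z^i) = −Σ_{j=i}^{−1} z^j·ψ(z^{i−j}) for i < 0. Suppose [a₁,b₁] ⊆ [a₀,b₀] are nested nonempty compact intervals, m ∈ ℝ, and ψ : Γ → Γ is k-linear with val_{[a₁,b₁]}(ψ(F)) ≥ val_{[a₀,b₀]}(F) + m for every F ∈ Γ. Then also val_{[a₁,b₁]}(h(ψ)(F)) ≥ val_{[a₀,b₀]}(F) + m for every F ∈ Γ. -/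
open LaurentPolynomial

/-- The valuation `val_p(F) = min_{i ∈ supp F} (v(c_i) + i·p)` of a Laurent polynomial
`F = Σᵢ cᵢ zⁱ ∈ k[z,z⁻¹]` at `p ∈ ℝ` (with `val_p(0) = +∞`). -/
noncomputable def valPt1 {k : Type*} [Field k] (v : k → EReal) (p : ℝ)
    (F : LaurentPolynomial k) : EReal :=
  F.coeff.support.inf fun i => v (F.coeff i) + (((i : ℝ) * p : ℝ) : EReal)

/-- The valuation `val_P(F) = inf_{p ∈ P} val_p(F)` associated to a subset `P ⊆ ℝ`. -/
noncomputable def valSet1 {k : Type*} [Field k] (v : k → EReal) (P : Set ℝ)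
    (F : LaurentPolynomial k) : EReal :=
  ⨅ p ∈ P, valPt1 v p F

section Aux

variable {k : Type*} [Field k] {v : k → EReal}

lemma valPt1_le_apply (hv_top : ∀ x : k, v x = ⊤ ↔ x = 0) (p : ℝ) (F : LaurentPolynomial k)
    (i : ℤ) : valPt1 v p F ≤ v (F.coeff i) + (((i : ℝ) * p : ℝ) : EReal) := by
  by_cases hi : i ∈ F.coeff.support
  · exact Finset.inf_le hi
  · have : F.coeff i = 0 := Finsupp.notMem_support_iff.1 hi
    rw [this, (hv_top 0).2 rfl, EReal.top_add_coe]
    exact le_top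

lemma le_valPt1 {p : ℝ} {F : LaurentPolynomial k} {c : EReal}
    (hc : ∀ i ∈ F.coeff.support, c ≤ v (F.coeff i) + (((i : ℝ) * p : ℝ) : EReal)) :
    c ≤ valPt1 v p F :=
  Finset.le_inf hc

lemma min_le_valPt1_add (hv_top : ∀ x : k, v x = ⊤ ↔ x = 0)
    (hv_add : ∀ x y : k, min (v x) (v y) ≤ v (x + y))
    (p : ℝ) (F G : LaurentPolynomial k) :
    min (valPt1 v p F) (valPt1 v p G) ≤ valPt1 v p (F + G) := by
  refine le_valPt1 fun i _ => ?_
  have hFG : (F + G).coeff i = F.coeff i + G.coeff i := rfl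
  have h1 := valPt1_le_apply hv_top p F i
  have h2 := valPt1_le_apply hv_top p G i
  have hadd := hv_add (F.coeff i) (G.coeff i)
  rw [hFG]
  rcases le_total (v (F.coeff i)) (v (G.coeff i)) with hle | hle
  · calc min (valPt1 v p F) (valPt1 v p G) ≤ valPt1 v p F := min_le_left _ _
      _ ≤ v (F.coeff i) + (((i : ℝ) * p : ℝ) : EReal) := h1
      _ ≤ v (F.coeff i + G.coeff i) + (((i : ℝ) * p : ℝ) : EReal) := by
          refine add_le_add_left ?_ _
          simpa [min_eq_left hle] using hadd
  · calc min (valPt1 v p F) (valPt1 v p G) ≤ valPt1 v p G := min_le_right _ _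
      _ ≤ v (G.coeff i) + (((i : ℝ) * p : ℝ) : EReal) := h2
      _ ≤ v (F.coeff i + G.coeff i) + (((i : ℝ) * p : ℝ) : EReal) := by
          refine add_le_add_left ?_ _
          simpa [min_eq_right hle] using hadd

lemma le_valPt1_sum (hv_top : ∀ x : k, v x = ⊤ ↔ x = 0)
    (hv_add : ∀ x y : k, min (v x) (v y) ≤ v (x + y))
    (p : ℝ) {α : Type*} (s : Finset α) (G : α → LaurentPolynomial k) {c : EReal}
    (hc : ∀ j ∈ s, c ≤ valPt1 v p (G j)) :
    c ≤ valPt1 v p (∑ j ∈ s, G j) := by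
  induction s using Finset.cons_induction with
  | empty =>
      simp only [Finset.sum_empty]
      exact le_valPt1 fun i hi => by simp at hi
  | cons a s' hnotmem ih =>
      rw [Finset.sum_cons]
      refine le_trans (le_min (hc a (Finset.mem_cons_self a s'))
        (ih fun j hj => hc j (Finset.mem_cons_of_mem hj))) ?_
      exact min_le_valPt1_add hv_top hv_add p _ _

lemma le_valPt1_T_mul (hv_top : ∀ x : k, v x = ⊤ ↔ x = 0)
    (p : ℝ) (j : ℤ) (G : LaurentPolynomial k) :
    (((j : ℝ) * p : ℝ) : EReal) + valPt1 v p G ≤ valPt1 v p (T j * G) := by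
  refine le_valPt1 fun i _ => ?_
  have hcoef : ((T j * G : LaurentPolynomial k)).coeff i = G.coeff (i - j) := by
    show (AddMonoidAlgebra.single j (1 : k) * G).coeff i = G.coeff (i - j)
    rw [AddMonoidAlgebra.coeff_single_mul_apply, one_mul]
    congr 1
    ring
  rw [hcoef]
  have h1 : valPt1 v p G ≤ v (G.coeff (i - j)) + ((((i - j : ℤ) : ℝ) * p : ℝ) : EReal) :=
    valPt1_le_apply hv_top p G (i - j)
  calc (((j : ℝ) * p : ℝ) : EReal) + valPt1 v p G
      ≤ (((j : ℝ) * p : ℝ) : EReal) + (v (G.coeff (i - j)) + ((((i - j : ℤ) : ℝ) * p : ℝ) : EReal)) :=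
        add_le_add_right h1 _
    _ = v (G.coeff (i - j)) + (((i : ℝ) * p : ℝ) : EReal) := by
        rw [← add_assoc, add_comm (((j : ℝ) * p : ℝ) : EReal) (v (G.coeff (i - j))), add_assoc,
          ← EReal.coe_add]
        congr 2
        push_cast
        ring

lemma le_valPt1_smul (hv_mul : ∀ x y : k, v (x * y) = v x + v y)
    (p : ℝ) (c : k) (G : LaurentPolynomial k) :
    v c + valPt1 v p G ≤ valPt1 v p (c • G) := by
  refine le_valPt1 fun i hi => ?_
  have hcoef : (c • G).coeff i = c * G.coeff i := rfl
  rw [hcoef, hv_mul, add_assoc]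
  refine add_le_add_right ?_ _
  by_cases hGi : i ∈ G.coeff.support
  · exact Finset.inf_le hGi
  · have : G.coeff i = 0 := Finsupp.notMem_support_iff.1 hGi
    have hGsupp : i ∈ (c • G).coeff.support := hi
    have : (c • G).coeff i ≠ 0 := Finsupp.mem_support_iff.1 hGsupp
    rw [hcoef] at this
    simp [Finsupp.notMem_support_iff.1 hGi] at this

lemma ereal_idem (a : EReal) (hb : a ≠ ⊥) (ht : a ≠ ⊤) (h : a = a + a) : a = 0 := by
  induction a using EReal.rec with
  | bot => exact absurd rfl hb
  | top => exact absurd rfl ht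
  | coe r =>
      rw [← EReal.coe_add] at h
      norm_cast at h ⊢
      linarith

lemma ereal_self_add_self (a : EReal) (hb : a ≠ ⊥) (ht : a ≠ ⊤) (h : a + a = 0) : a = 0 := by
  induction a using EReal.rec with
  | bot => exact absurd rfl hb
  | top => exact absurd rfl ht
  | coe r =>
      rw [← EReal.coe_add] at h
      norm_cast at h ⊢
      linarith

lemma v_one_eq_zero (hv_top : ∀ x : k, v x = ⊤ ↔ x = 0) (hv_bot : ∀ x : k, v x ≠ ⊥)
    (hv_mul : ∀ x y : k, v (x * y) = v x + v y) : v (1 : k) = 0 := by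
  have h := hv_mul 1 1
  rw [one_mul] at h
  have ht : v (1 : k) ≠ ⊤ := fun hh => one_ne_zero ((hv_top 1).1 hh)
  exact ereal_idem _ (hv_bot 1) ht h

lemma v_neg (hv_top : ∀ x : k, v x = ⊤ ↔ x = 0) (hv_bot : ∀ x : k, v x ≠ ⊥)
    (hv_mul : ∀ x y : k, v (x * y) = v x + v y) (x : k) : v (-x) = v x := by
  have hm1 : v (-1 : k) = 0 := by
    have h := hv_mul (-1) (-1)
    rw [neg_mul_neg, one_mul, v_one_eq_zero hv_top hv_bot hv_mul] at h
    exact ereal_self_add_self _ (hv_bot _) (fun hh => by simpa using (hv_top _).1 hh) h.symm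
  have : -x = -1 * x := by ring
  rw [this, hv_mul, hm1, zero_add]

lemma valPt1_neg (hv_top : ∀ x : k, v x = ⊤ ↔ x = 0) (hv_bot : ∀ x : k, v x ≠ ⊥)
    (hv_mul : ∀ x y : k, v (x * y) = v x + v y)
    (p : ℝ) (G : LaurentPolynomial k) : valPt1 v p G ≤ valPt1 v p (-G) := by
  refine le_valPt1 fun i _ => ?_
  have hcoef : (-G).coeff i = -(G.coeff i) := rfl
  rw [hcoef, v_neg hv_top hv_bot hv_mul]
  exact valPt1_le_apply hv_top p G i

lemma valPt1_T (hv_top : ∀ x : k, v x = ⊤ ↔ x = 0) (hv_bot : ∀ x : k, v x ≠ ⊥)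
    (hv_mul : ∀ x y : k, v (x * y) = v x + v y) (p : ℝ) (n : ℤ) :
    valPt1 v p (T (n : ℤ) : LaurentPolynomial k) = (((n : ℝ) * p : ℝ) : EReal) := by
  have hsupp : (T (n : ℤ) : LaurentPolynomial k).coeff.support = {n} :=
    Finsupp.support_single_ne_zero n one_ne_zero
  have happ : (T (n : ℤ) : LaurentPolynomial k).coeff n = 1 := Finsupp.single_eq_same
  rw [valPt1, hsupp, Finset.inf_singleton, happ, v_one_eq_zero hv_top hv_bot hv_mul, zero_add]

lemma valSet1_le {P : Set ℝ} {p : ℝ} (hp : p ∈ P) (F : LaurentPolynomial k) :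
    valSet1 v P F ≤ valPt1 v p F :=
  iInf₂_le p hp

lemma le_valSet1 {P : Set ℝ} {F : LaurentPolynomial k} {c : EReal}
    (hc : ∀ p ∈ P, c ≤ valPt1 v p F) : c ≤ valSet1 v P F :=
  le_iInf₂ hc

end Aux

/-- Continuity of the standard homotopy `h` for nested intervals: if `[a₁,b₁] ⊆ [a₀,b₀]` are
nested nonempty compact intervals and `ψ : Γ → Γ` is `k`-linear with
`val_{[a₁,b₁]}(ψ(F)) ≥ val_{[a₀,b₀]}(F) + m` for all `F`, then the operator `h` determined on the
basis by `h(ψ)(z^i) = Σ_{j=0}^{i−1} z^j·ψ(z^{i−j})` for `i ≥ 0` and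
`h(ψ)(z^i) = −Σ_{j=i}^{−1} z^j·ψ(z^{i−j})` for `i < 0` satisfies the same bound:
`val_{[a₁,b₁]}(h(ψ)(F)) ≥ val_{[a₀,b₀]}(F) + m` for all `F`. -/
theorem homotopy_operator_valuation_bound {k : Type*} [Field k] (v : k → EReal)
    (hv_top : ∀ x : k, v x = ⊤ ↔ x = 0) (hv_bot : ∀ x : k, v x ≠ ⊥)
    (hv_mul : ∀ x y : k, v (x * y) = v x + v y)
    (hv_add : ∀ x y : k, min (v x) (v y) ≤ v (x + y))
    (h : (LaurentPolynomial k →ₗ[k] LaurentPolynomial k) →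
      (LaurentPolynomial k →ₗ[k] LaurentPolynomial k))
    (h_nonneg : ∀ (ψ : LaurentPolynomial k →ₗ[k] LaurentPolynomial k) (i : ℤ), 0 ≤ i →
      h ψ (T i) = ∑ j ∈ Finset.Ico (0 : ℤ) i, T j * ψ (T (i - j)))
    (h_neg : ∀ (ψ : LaurentPolynomial k →ₗ[k] LaurentPolynomial k) (i : ℤ), i < 0 →
      h ψ (T i) = -∑ j ∈ Finset.Icc i (-1 : ℤ), T j * ψ (T (i - j)))
    (a₀ a₁ b₁ b₀ : ℝ) (h₀₁ : a₀ ≤ a₁) (h₁ : a₁ ≤ b₁) (h₁₀ : b₁ ≤ b₀)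
    (m : ℝ) (ψ : LaurentPolynomial k →ₗ[k] LaurentPolynomial k)
    (hψ : ∀ F : LaurentPolynomial k,
      valSet1 v (Set.Icc a₀ b₀) F + (m : EReal) ≤ valSet1 v (Set.Icc a₁ b₁) (ψ F)) :
    ∀ F : LaurentPolynomial k,
      valSet1 v (Set.Icc a₀ b₀) F + (m : EReal) ≤ valSet1 v (Set.Icc a₁ b₁) (h ψ F) := by
  have ha₀b₀ : a₀ ≤ b₀ := le_trans h₀₁ (le_trans h₁ h₁₀)
  -- lower bound for `valSet1` of `T n` over `[a₀, b₀]`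
  have valSet_T_ge : ∀ n : ℤ,
      ((min ((n : ℝ) * a₀) ((n : ℝ) * b₀) : ℝ) : EReal)
        ≤ valSet1 v (Set.Icc a₀ b₀) (T n : LaurentPolynomial k) := by
    intro n
    refine le_valSet1 fun p hp => ?_
    rw [valPt1_T hv_top hv_bot hv_mul]
    refine EReal.coe_le_coe_iff.2 ?_
    rcases le_total (0 : ℝ) (n : ℝ) with hn | hn
    · exact le_trans (min_le_left _ _) (mul_le_mul_of_nonneg_left hp.1 hn)
    · exact le_trans (min_le_right _ _) (mul_le_mul_of_nonpos_left hp.2 hn)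
  -- core bound for monomials
  have core : ∀ (i : ℤ) (p : ℝ), p ∈ Set.Icc a₁ b₁ →
      ((min ((i : ℝ) * a₀) ((i : ℝ) * b₀) + m : ℝ) : EReal) ≤ valPt1 v p (h ψ (T i)) := by
    intro i p hp
    rcases le_or_gt 0 i with hi | hi
    · rw [h_nonneg ψ i hi]
      refine le_valPt1_sum hv_top hv_add p _ _ fun j hj => ?_
      rw [Finset.mem_Ico] at hj
      have hj0 : (0 : ℝ) ≤ (j : ℝ) := by exact_mod_cast hj.1
      have hji : (j : ℝ) < (i : ℝ) := by exact_mod_cast hj.2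
      have key : (((j : ℝ) * p : ℝ) : EReal) + valPt1 v p (ψ (T (i - j)))
          ≤ valPt1 v p (T j * ψ (T (i - j))) := le_valPt1_T_mul hv_top p j _
      refine le_trans ?_ key
      have h2 : valSet1 v (Set.Icc a₀ b₀) (T (i - j) : LaurentPolynomial k) + (m : EReal)
          ≤ valPt1 v p (ψ (T (i - j))) :=
        le_trans (hψ _) (valSet1_le hp _)
      have h3 : ((min (((i - j : ℤ) : ℝ) * a₀) (((i - j : ℤ) : ℝ) * b₀) + m : ℝ) : EReal)
          ≤ valPt1 v p (ψ (T (i - j))) := by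
        refine le_trans ?_ h2
        rw [EReal.coe_add]
        exact add_le_add_left (valSet_T_ge (i - j)) _
      calc ((min ((i : ℝ) * a₀) ((i : ℝ) * b₀) + m : ℝ) : EReal)
          ≤ (((j : ℝ) * p : ℝ) : EReal)
            + ((min (((i - j : ℤ) : ℝ) * a₀) (((i - j : ℤ) : ℝ) * b₀) + m : ℝ) : EReal) := by
            rw [← EReal.coe_add]
            refine EReal.coe_le_coe_iff.2 ?_
            have hij : (0 : ℝ) < ((i : ℝ) - (j : ℝ)) := by linarith
            have hmin1 : min ((i : ℝ) * a₀) ((i : ℝ) * b₀) ≤ (i : ℝ) * a₀ := min_le_left _ _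
            have hmin2 : min (((i - j : ℤ) : ℝ) * a₀) (((i - j : ℤ) : ℝ) * b₀)
                = ((i : ℝ) - (j : ℝ)) * a₀ := by
              push_cast
              rw [min_eq_left]
              exact mul_le_mul_of_nonneg_left ha₀b₀ hij.le
            rw [hmin2]
            have hjp : (j : ℝ) * a₀ ≤ (j : ℝ) * p :=
              mul_le_mul_of_nonneg_left (le_trans h₀₁ hp.1) hj0
            nlinarith
        _ ≤ (((j : ℝ) * p : ℝ) : EReal) + valPt1 v p (ψ (T (i - j))) := add_le_add_right h3 _
    · rw [h_neg ψ i hi]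
      refine le_trans ?_ (valPt1_neg hv_top hv_bot hv_mul p _)
      refine le_valPt1_sum hv_top hv_add p _ _ fun j hj => ?_
      rw [Finset.mem_Icc] at hj
      have hji : (i : ℝ) ≤ (j : ℝ) := by exact_mod_cast hj.1
      have hj0 : (j : ℝ) ≤ -1 := by exact_mod_cast hj.2
      have key : (((j : ℝ) * p : ℝ) : EReal) + valPt1 v p (ψ (T (i - j)))
          ≤ valPt1 v p (T j * ψ (T (i - j))) := le_valPt1_T_mul hv_top p j _
      refine le_trans ?_ key
      have h2 : valSet1 v (Set.Icc a₀ b₀) (T (i - j) : LaurentPolynomial k) + (m : EReal)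
          ≤ valPt1 v p (ψ (T (i - j))) :=
        le_trans (hψ _) (valSet1_le hp _)
      have h3 : ((min (((i - j : ℤ) : ℝ) * a₀) (((i - j : ℤ) : ℝ) * b₀) + m : ℝ) : EReal)
          ≤ valPt1 v p (ψ (T (i - j))) := by
        refine le_trans ?_ h2
        rw [EReal.coe_add]
        exact add_le_add_left (valSet_T_ge (i - j)) _
      calc ((min ((i : ℝ) * a₀) ((i : ℝ) * b₀) + m : ℝ) : EReal)
          ≤ (((j : ℝ) * p : ℝ) : EReal)
            + ((min (((i - j : ℤ) : ℝ) * a₀) (((i - j : ℤ) : ℝ) * b₀) + m : ℝ) : EReal) := by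
            rw [← EReal.coe_add]
            refine EReal.coe_le_coe_iff.2 ?_
            have hij : ((i : ℝ) - (j : ℝ)) ≤ 0 := by linarith
            have hmin1 : min ((i : ℝ) * a₀) ((i : ℝ) * b₀) ≤ (i : ℝ) * b₀ := min_le_right _ _
            have hmin2 : min (((i - j : ℤ) : ℝ) * a₀) (((i - j : ℤ) : ℝ) * b₀)
                = ((i : ℝ) - (j : ℝ)) * b₀ := by
              push_cast
              rw [min_eq_right]
              exact mul_le_mul_of_nonpos_left ha₀b₀ hij
            rw [hmin2]
            have hjp : (j : ℝ) * b₀ ≤ (j : ℝ) * p :=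
              mul_le_mul_of_nonpos_left (le_trans hp.2 h₁₀) (by linarith)
            nlinarith
        _ ≤ (((j : ℝ) * p : ℝ) : EReal) + valPt1 v p (ψ (T (i - j))) := add_le_add_right h3 _
  -- main argument
  intro F
  refine le_valSet1 fun p hp => ?_
  -- decompose `F` as a sum of monomials
  have hF : F = ∑ i ∈ F.coeff.support, (F.coeff i) • (T i : LaurentPolynomial k) := by
    conv_lhs => rw [← AddMonoidAlgebra.sum_coeff_single F]
    rw [Finsupp.sum]
    refine Finset.sum_congr rfl fun i _ => ?_
    show AddMonoidAlgebra.single i (F.coeff i) = F.coeff i • AddMonoidAlgebra.single i (1 : k)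
    rw [AddMonoidAlgebra.smul_single, smul_eq_mul, mul_one]
  have hhF : h ψ F = ∑ i ∈ F.coeff.support, (F.coeff i) • (h ψ (T i)) := by
    conv_lhs => rw [hF]
    rw [map_sum]
    exact Finset.sum_congr rfl fun i _ => (h ψ).map_smul _ _
  rw [hhF]
  refine le_valPt1_sum hv_top hv_add p _ _ fun i hi => ?_
  refine le_trans ?_ (le_valPt1_smul hv_mul p (F.coeff i) _)
  refine le_trans ?_ (add_le_add_right (core i p hp) (v (F.coeff i)))
  -- reduces to : valSet1 [a₀,b₀] F + m ≤ v (F.coeff i) + (min + m)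
  have hvalF : valSet1 v (Set.Icc a₀ b₀) F
      ≤ v (F.coeff i) + ((min ((i : ℝ) * a₀) ((i : ℝ) * b₀) : ℝ) : EReal) := by
    rcases le_total ((i : ℝ) * a₀) ((i : ℝ) * b₀) with hm | hm
    · rw [min_eq_left hm]
      exact le_trans (valSet1_le (Set.mem_Icc.mpr ⟨le_refl a₀, ha₀b₀⟩) F) (valPt1_le_apply hv_top a₀ F i)
    · rw [min_eq_right hm]
      exact le_trans (valSet1_le (Set.mem_Icc.mpr ⟨ha₀b₀, le_refl b₀⟩) F) (valPt1_le_apply hv_top b₀ F i)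
  calc valSet1 v (Set.Icc a₀ b₀) F + (m : EReal)
      ≤ (v (F.coeff i) + ((min ((i : ℝ) * a₀) ((i : ℝ) * b₀) : ℝ) : EReal)) + (m : EReal) :=
        add_le_add_left hvalF _
    _ = v (F.coeff i) + ((min ((i : ℝ) * a₀) ((i : ℝ) * b₀) + m : ℝ) : EReal) := by
        rw [add_assoc, ← EReal.coe_add]
end

section
/- Let k be a field equipped with an additive valuation v : k → ℝ ∪ {+∞} (v(x) = +∞ iff x = 0, v(xy) = v(x) + v(y), v(x+y) ≥ min(v(x), v(y))), and let Γ = k[z,z⁻¹] with val_p and val_P defined by val_p(Σ c_i z^i) = min_{i}(v(c_i) + i·p) and val_P = inf_{p∈P} val_p. Let P₀, P₁ ⊆ ℝ be nonempty compact sets and set s = inf P₀ − sup P₁. For a k-linear map ψ : Γ → Γ define C(ψ) = M_{z⁻¹} ∘ ψ ∘ M_z, i.e. C(ψ)(F) = z⁻¹·ψ(z·F). If m ∈ ℝ satisfies val_{P₁}(ψ(F)) ≥ val_{P₀}(F) + m for all F ∈ Γ, then for every natural number n and every F ∈ Γ, val_{P₁}(Cⁿ(ψ)(F)) ≥ val_{P₀}(F)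 + m + n·s. In particular, if sup P₁ < inf P₀ (for instance if P₁ and P₀ are disjoint with P₁ in the negative and P₀ in the positive half-line) then s > 0 and the operator valuation of Cⁿ(ψ) tends to +∞ with n. -/
open LaurentPolynomial

/-- The conjugation operator `C(ψ) = M_{z⁻¹} ∘ ψ ∘ M_z`, i.e. `C(ψ)(F) = z⁻¹·ψ(z·F)`. -/
noncomputable def conjOp (k : Type*) [Field k]
    (ψ : LaurentPolynomial k →ₗ[k] LaurentPolynomial k) :
    LaurentPolynomial k →ₗ[k] LaurentPolynomial k :=
  (LinearMap.mulLeft k (T (-1))) ∘ₗ ψ ∘ₗ (LinearMap.mulLeft k (T 1))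

/-! Multiplying by `zᵃ` only shifts exponents by `a`, so it raises `val_p` by `a·p`. Hence `M_z`
raises `val_{P₀}` by at least `inf P₀` and `M_{z⁻¹}` lowers `val_{P₁}` by at most `sup P₁`: each
conjugation gains `s = inf P₀ − sup P₁`, and `n` conjugations gain `n·s`. -/

section Shift

variable {k : Type*} [Field k] (v : k → EReal)

lemma coeff_T_mul (a : ℤ) (F : LaurentPolynomial k) (i : ℤ) :
    (T a * F).coeff i = F.coeff (i - a) := by
  rw [show (T a : LaurentPolynomial k) = AddMonoidAlgebra.single a 1 from rfl,
    AddMonoidAlgebra.coeff_single_mul_apply, one_mul, neg_add_eq_sub]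

lemma valPt1_add_le_valPt1_T_mul (p : ℝ) (a : ℤ) (F : LaurentPolynomial k) :
    valPt1 v p F + ((a * p : ℝ) : EReal) ≤ valPt1 v p (T a * F) := by
  refine Finset.le_inf fun i hi => ?_
  rw [Finsupp.mem_support_iff, coeff_T_mul] at hi
  rw [coeff_T_mul]
  have hle : valPt1 v p F ≤ v (F.coeff (i - a)) + ((((i - a : ℤ) : ℝ) * p : ℝ) : EReal) :=
    Finset.inf_le (Finsupp.mem_support_iff.2 hi)
  calc valPt1 v p F + ((a * p : ℝ) : EReal)
      ≤ v (F.coeff (i - a)) + ((((i - a : ℤ) : ℝ) * p : ℝ) : EReal) + ((a * p : ℝ) : EReal) := by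
        gcongr
    _ = v (F.coeff (i - a)) + ((i * p : ℝ) : EReal) := by
        rw [add_assoc, ← EReal.coe_add]
        congr 2
        push_cast
        ring

lemma valSet1_add_le_valSet1_T_mul (P : Set ℝ) (a : ℤ) (c : ℝ) (hc : ∀ p ∈ P, c ≤ a * p)
    (F : LaurentPolynomial k) :
    valSet1 v P F + (c : EReal) ≤ valSet1 v P (T a * F) := by
  refine le_iInf₂ fun p hp => ?_
  calc valSet1 v P F + (c : EReal) ≤ valPt1 v p F + ((a * p : ℝ) : EReal) :=
        add_le_add (iInf₂_le p hp) (EReal.coe_le_coe_iff.2 (hc p hp))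
    _ ≤ valPt1 v p (T a * F) := valPt1_add_le_valPt1_T_mul v p a F

end Shift

section Conjugation

variable {k : Type*} [Field k] (v : k → EReal) {P₀ P₁ : Set ℝ}

lemma valSet1_conjOp_ge (h₀ : BddBelow P₀) (h₁ : BddAbove P₁) (m : ℝ)
    (φ : LaurentPolynomial k →ₗ[k] LaurentPolynomial k)
    (hφ : ∀ F, valSet1 v P₀ F + (m : EReal) ≤ valSet1 v P₁ (φ F))
    (F : LaurentPolynomial k) :
    valSet1 v P₀ F + ((m + (sInf P₀ - sSup P₁) : ℝ) : EReal) ≤ valSet1 v P₁ (conjOp k φ F) := by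
  have hz : valSet1 v P₀ F + ((sInf P₀ : ℝ) : EReal) ≤ valSet1 v P₀ (T 1 * F) :=
    valSet1_add_le_valSet1_T_mul v P₀ 1 _ (fun p hp => by simpa using csInf_le h₀ hp) F
  have hzinv : ∀ G, valSet1 v P₁ G + ((-sSup P₁ : ℝ) : EReal) ≤ valSet1 v P₁ (T (-1) * G) :=
    valSet1_add_le_valSet1_T_mul v P₁ (-1) _ (fun p hp => by simpa using le_csSup h₁ hp)
  calc valSet1 v P₀ F + ((m + (sInf P₀ - sSup P₁) : ℝ) : EReal)
      = valSet1 v P₀ F + ((sInf P₀ : ℝ) : EReal) + (m : EReal) + ((-sSup P₁ : ℝ) : EReal) := by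
        rw [add_assoc, add_assoc, ← EReal.coe_add, ← EReal.coe_add]
        ring_nf
    _ ≤ valSet1 v P₀ (T 1 * F) + (m : EReal) + ((-sSup P₁ : ℝ) : EReal) := by gcongr
    _ ≤ valSet1 v P₁ (φ (T 1 * F)) + ((-sSup P₁ : ℝ) : EReal) := by gcongr; exact hφ _
    _ ≤ valSet1 v P₁ (conjOp k φ F) := hzinv _

lemma valSet1_iterate_conjOp_ge (h₀ : BddBelow P₀) (h₁ : BddAbove P₁) (n : ℕ) (m : ℝ)
    (φ : LaurentPolynomial k →ₗ[k] LaurentPolynomial k)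
    (hφ : ∀ F, valSet1 v P₀ F + (m : EReal) ≤ valSet1 v P₁ (φ F))
    (F : LaurentPolynomial k) :
    valSet1 v P₀ F + ((m + n * (sInf P₀ - sSup P₁) : ℝ) : EReal) ≤
      valSet1 v P₁ ((conjOp k)^[n] φ F) := by
  induction n generalizing m φ with
  | zero => simpa using hφ F
  | succ n ih =>
    rw [Function.iterate_succ_apply]
    convert ih _ _ (valSet1_conjOp_ge v h₀ h₁ m φ hφ) using 3
    push_cast
    ring

end Conjugation

theorem conjugation_valuation_gain_general {k : Type*} [Field k] (v : k → EReal)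
    (P₀ P₁ : Set ℝ) (hP₀c : IsCompact P₀) (hP₁c : IsCompact P₁)
    (m : ℝ) (ψ : LaurentPolynomial k →ₗ[k] LaurentPolynomial k)
    (hψ : ∀ F : LaurentPolynomial k,
      valSet1 v P₀ F + (m : EReal) ≤ valSet1 v P₁ (ψ F)) :
    (∀ (n : ℕ) (F : LaurentPolynomial k),
      valSet1 v P₀ F + ((m + n * (sInf P₀ - sSup P₁) : ℝ) : EReal) ≤
        valSet1 v P₁ ((conjOp k)^[n] ψ F)) ∧
    (sSup P₁ < sInf P₀ → 0 < sInf P₀ - sSup P₁) ∧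
    (sSup P₁ < sInf P₀ → ∀ M : ℝ, ∃ N : ℕ, ∀ n ≥ N, ∀ F : LaurentPolynomial k,
      valSet1 v P₀ F + (M : EReal) ≤ valSet1 v P₁ ((conjOp k)^[n] ψ F)) := by
  have gain n F := valSet1_iterate_conjOp_ge v hP₀c.bddBelow hP₁c.bddAbove n m ψ hψ F
  refine ⟨gain, sub_pos.2, fun hlt M => ?_⟩
  set s := sInf P₀ - sSup P₁
  have hs : 0 < s := sub_pos.2 hlt
  obtain ⟨N, hN⟩ := exists_nat_ge ((M - m) / s)
  refine ⟨N, fun n hn F => le_trans ?_ (gain n F)⟩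
  have hM : M ≤ m + n * s := by
    have := (div_le_iff₀ hs).1 (hN.trans (Nat.cast_le.2 hn))
    linarith
  gcongr

/-- Valuation gain under conjugation: let `P₀, P₁ ⊆ ℝ` be nonempty compact sets and
`s = inf P₀ − sup P₁`.  If `ψ : Γ → Γ` is `k`-linear with
`val_{P₁}(ψ(F)) ≥ val_{P₀}(F) + m` for all `F`, then for every `n` and every `F`,
`val_{P₁}(Cⁿ(ψ)(F)) ≥ val_{P₀}(F) + m + n·s`.  In particular, if `sup P₁ < inf P₀` then
`s > 0` and the operator valuation of `Cⁿ(ψ)` tends to `+∞` with `n`. -/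
theorem conjugation_valuation_gain {k : Type*} [Field k] (v : k → EReal)
    (hv_top : ∀ x : k, v x = ⊤ ↔ x = 0) (hv_bot : ∀ x : k, v x ≠ ⊥)
    (hv_mul : ∀ x y : k, v (x * y) = v x + v y)
    (hv_add : ∀ x y : k, min (v x) (v y) ≤ v (x + y))
    (P₀ P₁ : Set ℝ) (hP₀c : IsCompact P₀) (hP₁c : IsCompact P₁)
    (hP₀ne : P₀.Nonempty) (hP₁ne : P₁.Nonempty)
    (m : ℝ) (ψ : LaurentPolynomial k →ₗ[k] LaurentPolynomial k)
    (hψ : ∀ F : LaurentPolynomial k,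
      valSet1 v P₀ F + (m : EReal) ≤ valSet1 v P₁ (ψ F)) :
    (∀ (n : ℕ) (F : LaurentPolynomial k),
      valSet1 v P₀ F + ((m + n * (sInf P₀ - sSup P₁) : ℝ) : EReal) ≤
        valSet1 v P₁ ((conjOp k)^[n] ψ F)) ∧
    (sSup P₁ < sInf P₀ → 0 < sInf P₀ - sSup P₁) ∧
    (sSup P₁ < sInf P₀ → ∀ M : ℝ, ∃ N : ℕ, ∀ n ≥ N, ∀ F : LaurentPolynomial k,
      valSet1 v P₀ F + (M : EReal) ≤ valSet1 v P₁ ((conjOp k)^[n] ψ F)) :=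
  conjugation_valuation_gain_general v P₀ P₁ hP₀c hP₁c m ψ hψ
end

section
/- Let k be a field and consider the field of Hahn series HahnSeries ℝ k (formal series Σ_{λ∈ℝ} c_λ T^λ with well-ordered support). The subset Λ consisting of those series whose support is bounded below and has finite intersection with every bounded subset of ℝ is a subfield: it contains 0 and 1, is closed under addition, negation, and multiplication, and the inverse (in HahnSeries ℝ k) of every nonzero element of Λ again belongs to Λ. -/
/-!
A series lies in `novikovField k` exactly when its support is finite below every level `c`.
Supports of sums and products lie in unions and sumsets of the given supports, which stay finite
below. For the inverse, `f = c T^a (1 - y)` with `0 < y.orderTop`, so `f⁻¹ = c⁻¹ T^(-a) Σ yⁿ` has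
support in `-a + closure (supp y)`. The support of `y` is positive and finite below, hence has a
least element `ε > 0`; every element `≤ (n + 1) • ε` of its additive closure is `0` or `s + t` with
`s ∈ supp y` and `t ≤ n • ε` in the closure, so by induction and the Archimedean property the
closure is finite below too.
-/

open Set Pointwise

/-- The Novikov field inside the field of Hahn series `HahnSeries ℝ k`: the set of series
`Σ_{λ∈ℝ} c_λ T^λ` whose support (set of exponents with nonvanishing coefficient) is bounded
below and has finite intersection with every bounded subset of `ℝ`. -/
def novikovField (k : Type*) [Field k] : Set (HahnSeries ℝ k) :=
  {f | BddBelow f.support ∧ ∀ B : Set ℝ, Bornology.IsBounded B → (f.support ∩ B).Finite}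

def FiniteBelow {Γ : Type*} [Preorder Γ] (s : Set Γ) : Prop :=
  ∀ c, (s ∩ Iic c).Finite

theorem Set.Finite.finiteBelow {Γ : Type*} [Preorder Γ] {s : Set Γ} (hs : s.Finite) :
    FiniteBelow s :=
  fun _ => hs.inter_of_left _

namespace FiniteBelow

section Preorder

variable {Γ : Type*} [Preorder Γ] {s t : Set Γ}

theorem mono (ht : FiniteBelow t) (hst : s ⊆ t) : FiniteBelow s :=
  fun c => (ht c).subset (inter_subset_inter_left _ hst)

theorem union (hs : FiniteBelow s) (ht : FiniteBelow t) : FiniteBelow (s ∪ t) :=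
  fun c => by simpa only [union_inter_distrib_right] using (hs c).union (ht c)

end Preorder

section LinearOrder

variable {Γ : Type*} [LinearOrder Γ] {s : Set Γ}

theorem exists_isLeast (hs : FiniteBelow s) (hne : s.Nonempty) : ∃ a, IsLeast s a := by
  obtain ⟨b, hb⟩ := hne
  obtain ⟨a, ⟨has, hab⟩, hmin⟩ := exists_min_image (s ∩ Iic b) id (hs b) ⟨b, hb, le_rfl⟩
  refine ⟨a, has, fun x hx => ?_⟩
  rcases le_total x b with hxb | hbx
  · exact hmin x ⟨hx, hxb⟩
  · exact hab.trans hbx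

theorem bddBelow [Nonempty Γ] (hs : FiniteBelow s) : BddBelow s := by
  rcases s.eq_empty_or_nonempty with rfl | hne
  · exact bddBelow_empty
  · obtain ⟨a, ha⟩ := hs.exists_isLeast hne
    exact ha.bddBelow

theorem _root_.finiteBelow_iff_bddBelow_and_finite_inter_isBounded [Nonempty Γ] [Bornology Γ]
    [IsOrderBornology Γ] :
    FiniteBelow s ↔ BddBelow s ∧ ∀ B : Set Γ, Bornology.IsBounded B → (s ∩ B).Finite := by
  refine ⟨fun hs => ⟨hs.bddBelow, fun B hB => ?_⟩, fun ⟨⟨b, hb⟩, hfin⟩ c => ?_⟩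
  · obtain ⟨c, hc⟩ := hB.bddAbove
    exact (hs c).subset (inter_subset_inter_right _ hc)
  · have hIcc : Bornology.IsBounded (Icc b c) :=
      isBounded_iff_bddBelow_bddAbove.2 ⟨bddBelow_Icc, bddAbove_Icc⟩
    exact (hfin _ hIcc).subset fun x ⟨hx, hxc⟩ => ⟨hx, hb hx, hxc⟩

end LinearOrder

section OrderedAddCommGroup

variable {Γ : Type*} [AddCommGroup Γ] [LinearOrder Γ] [IsOrderedAddMonoid Γ] {s t : Set Γ}

theorem add (hs : FiniteBelow s) (ht : FiniteBelow t) : FiniteBelow (s + t) := by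
  obtain ⟨a, ha⟩ := hs.bddBelow
  obtain ⟨b, hb⟩ := ht.bddBelow
  refine fun c => ((hs (c - b)).add (ht (c - a))).subset ?_
  rintro _ ⟨⟨u, hu, v, hv, rfl⟩, huv⟩
  rw [mem_Iic] at huv
  refine ⟨u, ⟨hu, ?_⟩, v, ⟨hv, ?_⟩, rfl⟩
  · exact le_sub_iff_add_le.2 ((add_le_add le_rfl (hb hv)).trans huv)
  · exact le_sub_iff_add_le'.2 ((add_le_add (ha hu) le_rfl).trans huv)

theorem addSubmonoid_closure [Archimedean Γ] (hs : FiniteBelow s) (hpos : s ⊆ Ioi 0) :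
    FiniteBelow (AddSubmonoid.closure s : Set Γ) := by
  rcases s.eq_empty_or_nonempty with rfl | hne
  · simpa using (finite_singleton (0 : Γ)).finiteBelow
  obtain ⟨ε, hεs, hεle⟩ := hs.exists_isLeast hne
  have hε : 0 < ε := hpos hεs
  have hnonneg : ∀ y ∈ AddSubmonoid.closure s, 0 ≤ y := fun y hy =>
    (AddSubmonoid.closure_le (S := AddSubmonoid.nonneg Γ)).2 (fun x hx => (hpos hx).le) hy
  have hlevel : ∀ n : ℕ, ((AddSubmonoid.closure s : Set Γ) ∩ Iic (n • ε)).Finite := by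
    intro n
    induction n with
    | zero =>
      refine (finite_singleton 0).subset fun y ⟨hy, hy0⟩ => ?_
      exact le_antisymm (by simpa using hy0) (hnonneg y hy)
    | succ n ih =>
      refine ((finite_singleton 0).union ((hs ((n + 1) • ε)).add ih)).subset ?_
      rintro _ ⟨hy, hyn⟩
      induction hy using AddSubmonoid.closure_induction_left with
      | zero => exact Or.inl rfl
      | add_left u hu v hv _ =>
        rw [mem_Iic, succ_nsmul'] at hyn
        refine Or.inr ⟨u, ⟨hu, ?_⟩, v, ⟨hv, ?_⟩, rfl⟩
        · rw [mem_Iic, succ_nsmul']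
          exact (le_add_of_nonneg_right (hnonneg v hv)).trans hyn
        · exact le_of_add_le_add_left ((add_le_add (hεle hu) le_rfl).trans hyn)
  intro c
  obtain ⟨n, hn⟩ := Archimedean.arch c hε
  exact (hlevel n).subset (inter_subset_inter_right _ (Iic_subset_Iic.2 hn))

end OrderedAddCommGroup

end FiniteBelow

namespace HahnSeries

theorem finiteBelow_support_single {Γ R : Type*} [PartialOrder Γ] [Zero R] (g : Γ) (r : R) :
    FiniteBelow (single g r).support :=
  ((finite_singleton g).subset support_single_subset).finiteBelow

variable {Γ R : Type*} [AddCommGroup Γ] [LinearOrder Γ] [IsOrderedAddMonoid Γ]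

theorem finiteBelow_support_mul [NonUnitalNonAssocSemiring R] {x y : HahnSeries Γ R}
    (hx : FiniteBelow x.support) (hy : FiniteBelow y.support) : FiniteBelow (x * y).support :=
  (hx.add hy).mono support_mul_subset

theorem finiteBelow_support_inv [Archimedean Γ] [Field R] {x : HahnSeries Γ R}
    (hx : FiniteBelow x.support) : FiniteBelow x⁻¹.support := by
  rcases eq_or_ne x 0 with rfl | hx0
  · simpa using finite_empty.finiteBelow
  set a : HahnSeries Γ R := single (-x.order) x.leadingCoeff⁻¹
  set y : HahnSeries Γ R := 1 - a * x
  have ha : FiniteBelow a.support := finiteBelow_support_single _ _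
  have hy_pos : 0 < y.orderTop :=
    unit_aux x (inv_mul_cancel₀ (leadingCoeff_ne_zero.2 hx0)) _ (neg_add_cancel x.order)
  have hy : FiniteBelow y.support := by
    have h1 : FiniteBelow (1 : HahnSeries Γ R).support := by
      simpa using finiteBelow_support_single (0 : Γ) (1 : R)
    exact (h1.union (finiteBelow_support_mul ha hx)).mono (support_sub_subset _ _)
  have hy_supp : y.support ⊆ Ioi 0 := fun g hg =>
    WithTop.coe_lt_coe.1 (hy_pos.trans_le (orderTop_le_of_coeff_ne_zero hg))
  have hsum : (SummableFamily.powers y).hsum.support ⊆ AddSubmonoid.closure y.support := by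
    refine SummableFamily.support_hsum_subset.trans (iUnion_subset fun n => ?_)
    rw [SummableFamily.coe_powers hy_pos]
    exact SummableFamily.support_pow_subset_closure y n
  rw [inv_def]
  exact (ha.add (hy.addSubmonoid_closure hy_supp)).mono
    (support_mul_subset.trans (add_subset_add_left hsum))

end HahnSeries

theorem mem_novikovField_iff {k : Type*} [Field k] {f : HahnSeries ℝ k} :
    f ∈ novikovField k ↔ FiniteBelow f.support :=
  finiteBelow_iff_bddBelow_and_finite_inter_isBounded.symm

/-- The Novikov field is a subfield of the field of Hahn series `HahnSeries ℝ k`: it contains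
`0` and `1`, is closed under addition, negation and multiplication, and the inverse (taken in
`HahnSeries ℝ k`) of every nonzero element of it again belongs to it. -/
theorem novikovField_is_subfield (k : Type*) [Field k] :
    (0 : HahnSeries ℝ k) ∈ novikovField k ∧
    (1 : HahnSeries ℝ k) ∈ novikovField k ∧
    (∀ f g : HahnSeries ℝ k, f ∈ novikovField k → g ∈ novikovField k →
      f + g ∈ novikovField k) ∧
    (∀ f : HahnSeries ℝ k, f ∈ novikovField k → -f ∈ novikovField k) ∧
    (∀ f g : HahnSeries ℝ k, f ∈ novikovField k → g ∈ novikovField k →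
      f * g ∈ novikovField k) ∧
    (∀ f : HahnSeries ℝ k, f ∈ novikovField k → f ≠ 0 → f⁻¹ ∈ novikovField k) := by
  simp only [mem_novikovField_iff]
  refine ⟨?_, ?_, fun f g hf hg => (hf.union hg).mono (HahnSeries.support_add_subset f g),
    fun f hf => by rwa [HahnSeries.support_neg], fun f g => HahnSeries.finiteBelow_support_mul,
    fun f hf _ => HahnSeries.finiteBelow_support_inv hf⟩
  · simpa using finite_empty.finiteBelow
  · simpa using HahnSeries.finiteBelow_support_single (0 : ℝ) (1 : k)
end
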